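/- Let G = A * B with distinct nontrivial a, c, f ∈ A and nontrivial b ∈ B. For n ≥ 1 set g_n = v w v w² ⋯ v wⁿ v where v = b a b c and w = b f. Then Δ₂(g_n) = n for all n ≥ 1. -/

import Mathlib

/-!
The reduced word of `g_n` is the concatenation of the syllables of
`v w v w² ⋯ v wⁿ v`, with `v = babc` and `w = bf`. Since `a ≠ f` and `c ≠ f`, the `a`-syllables
and `c`-syllables are the second and fourth letters of the `n + 1` copies of `v`, so they
interleave: the `a`-segments are exactly the `n` stretches from the `a` of one copy of `v` to the
`a` of the next, and the one leaving the `m`-th copy has type `(1, 2m + 3)`. Regrouping the sum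
defining `Δ₂` by segments, `Δ₂(g)` is the sum over all `a`-segments of `g` of the sign of `k - m`
for a segment of type `(m, k)`; each of the `n` segments of `g_n` contributes `1`.
-/

open Monoid Monoid.CoprodI

attribute [local instance] Classical.propDecidable

/-- The list of syllables of the reduced word representing `g`. -/
noncomputable def syllables {ι : Type*} {M : ι → Type*} [∀ i, Group (M i)]
    (g : CoprodI M) : List (Σ i, M i) :=
  letI := Classical.decEq ι
  letI : ∀ i, DecidableEq (M i) := fun _ => Classical.decEq _
  (Word.equiv g).toList

/-- `g` is a palindrome iff its reduced word reads the same backwards. -/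
noncomputable def IsPalindrome {ι : Type*} {M : ι → Type*} [∀ i, Group (M i)]
    (g : CoprodI M) : Prop :=
  (syllables g).reverse = syllables g

/-- `segCount2 sa sc m n g` is the number of `a`-segments of type `(m,n)` in the
reduced form of `g`: triples `p < r < q` where `p, q` are consecutive occurrences
of the syllable `sa`, `r` is the unique occurrence of the syllable `sc` strictly
between them, with `m` syllables before `sc` and `n` syllables after it. -/
noncomputable def segCount2 {ι : Type*} {M : ι → Type*} [∀ i, Group (M i)]
    (sa sc : Σ i, M i) (m n : ℕ) (g : CoprodI M) : ℕ :=
  (((Finset.range (syllables g).length ×ˢ Finset.range (syllables g).length) ×ˢ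
      Finset.range (syllables g).length).filter
    (fun t => t.1.1 < t.1.2 ∧ t.1.2 < t.2 ∧
      (syllables g)[t.1.1]? = some sa ∧ (syllables g)[t.2]? = some sa ∧
      (syllables g)[t.1.2]? = some sc ∧
      (∀ u ∈ Finset.Ioo t.1.1 t.2, (syllables g)[u]? ≠ some sa) ∧
      (∀ u ∈ Finset.Ioo t.1.1 t.2, u ≠ t.1.2 → (syllables g)[u]? ≠ some sc) ∧
      t.1.2 - t.1.1 = m + 1 ∧ t.2 - t.1.2 = n + 1)).card


/-- The quasi-homomorphism `Δ₂(g) = Σ_{m<n} t_{m,n}(g)` (a finite sum), where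
`t_{m,n} = d_{m,n} - d_{n,m}`. -/
noncomputable def Delta2 {ι : Type*} {M : ι → Type*} [∀ i, Group (M i)]
    (sa sc : Σ i, M i) (g : CoprodI M) : ℤ :=
  ∑ᶠ p : ℕ × ℕ, if p.1 < p.2 then
    (segCount2 sa sc p.1 p.2 g : ℤ) - segCount2 sa sc p.2 p.1 g else 0

open Finset

section Segments

variable {α : Type*}

noncomputable def segments (sa sc : α) (L : List α) : Finset ((ℕ × ℕ) × ℕ) :=
  ((range L.length ×ˢ range L.length) ×ˢ range L.length).filter fun t =>
    t.1.1 < t.1.2 ∧ t.1.2 < t.2 ∧ L[t.1.1]? = some sa ∧ L[t.2]? = some sa ∧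
      L[t.1.2]? = some sc ∧ (∀ u ∈ Ioo t.1.1 t.2, L[u]? ≠ some sa) ∧
      (∀ u ∈ Ioo t.1.1 t.2, u ≠ t.1.2 → L[u]? ≠ some sc)

def segmentType (t : (ℕ × ℕ) × ℕ) : ℕ × ℕ := (t.1.2 - t.1.1 - 1, t.2 - t.1.2 - 1)

theorem segCount2_eq_card_segments {ι : Type*} {M : ι → Type*} [∀ i, Group (M i)]
    (sa sc : Σ i, M i) (m n : ℕ) (g : CoprodI M) :
    segCount2 sa sc m n g = #{t ∈ segments sa sc (syllables g) | segmentType t = (m, n)} := by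
  rw [segCount2]
  congr 1
  ext t
  simp only [segments, segmentType, mem_filter, Prod.mk.injEq]
  constructor
  · rintro ⟨hrange, h₁, h₂, h₃, h₄, h₅, h₆, h₇, hm, hn⟩
    exact ⟨⟨hrange, h₁, h₂, h₃, h₄, h₅, h₆, h₇⟩, by omega, by omega⟩
  · rintro ⟨⟨hrange, h₁, h₂, h₃, h₄, h₅, h₆, h₇⟩, hm, hn⟩
    exact ⟨hrange, h₁, h₂, h₃, h₄, h₅, h₆, h₇, by omega, by omega⟩

theorem finsum_ite_lt_sub_eq_sign (x : ℕ × ℕ) :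
    ∑ᶠ p : ℕ × ℕ, (if p.1 < p.2 then
      (if x = p then 1 else 0) - (if x = p.swap then 1 else 0) else 0 : ℤ) =
      Int.sign ((x.2 : ℤ) - x.1) := by
  obtain ⟨m, k⟩ := x
  rcases lt_trichotomy m k with h | rfl | h
  · rw [finsum_eq_single _ (m, k)]
    · simp [h, h.ne, Int.sign_eq_one_of_pos]
    · rintro ⟨p, q⟩ hpq
      simp only [ne_eq, Prod.swap_prod_mk, Prod.mk.injEq] at hpq ⊢
      split_ifs <;> omega
  · simp only [sub_self, Int.sign_zero]
    refine finsum_eq_zero_of_forall_eq_zero fun ⟨p, q⟩ => ?_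
    simp only [Prod.swap_prod_mk, Prod.mk.injEq]
    split_ifs <;> omega
  · rw [finsum_eq_single _ (k, m)]
    · simp [h, h.ne, Int.sign_eq_neg_one_of_neg]
    · rintro ⟨p, q⟩ hpq
      simp only [ne_eq, Prod.swap_prod_mk, Prod.mk.injEq] at hpq ⊢
      split_ifs <;> omega

theorem Delta2_eq_sum_sign {ι : Type*} {M : ι → Type*} [∀ i, Group (M i)]
    (sa sc : Σ i, M i) (g : CoprodI M) :
    Delta2 sa sc g = ∑ t ∈ segments sa sc (syllables g),
      Int.sign (((segmentType t).2 : ℤ) - (segmentType t).1) := by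
  set S := segments sa sc (syllables g)
  have hfiber (p : ℕ × ℕ) :
      (if p.1 < p.2 then (segCount2 sa sc p.1 p.2 g : ℤ) - segCount2 sa sc p.2 p.1 g else 0) =
        ∑ t ∈ S, if p.1 < p.2 then
          (if segmentType t = p then 1 else 0) - (if segmentType t = p.swap then 1 else 0)
          else 0 := by
    split_ifs
    · rw [sum_sub_distrib, ← natCast_card_filter, ← natCast_card_filter,
        segCount2_eq_card_segments, segCount2_eq_card_segments]
      rfl
    · simp
  have hfinite (t : (ℕ × ℕ) × ℕ) : (Function.support fun p : ℕ × ℕ => if p.1 < p.2 then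
      (if segmentType t = p then 1 else 0) - (if segmentType t = p.swap then 1 else 0)
      else (0 : ℤ)).Finite := by
    refine (Set.toFinite {segmentType t, (segmentType t).swap}).subset fun p hp => ?_
    contrapose! hp
    simp only [Set.mem_insert_iff, Set.mem_singleton_iff, not_or] at hp
    have hswap : segmentType t ≠ p.swap := fun h => hp.2 (by rw [h, Prod.swap_swap])
    simp [Ne.symm hp.1, hswap]
  simp_rw [Delta2, hfiber, ← sum_finsum_comm _ _ fun t _ => hfinite t,
    finsum_ite_lt_sub_eq_sign]


theorem segments_eq_image_of_interleaved {L : List α} {sa sc : α} {n : ℕ} {A C : ℕ → ℕ}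
    (hAC : ∀ i, A i < C i) (hCA : ∀ i, C i < A (i + 1))
    (hA : ∀ k, L[k]? = some sa ↔ ∃ i ≤ n, k = A i)
    (hC : ∀ k, L[k]? = some sc ↔ ∃ i ≤ n, k = C i) :
    segments sa sc L = (range n).image fun i => ((A i, C i), A (i + 1)) := by
  have hmono : StrictMono A := strictMono_nat_of_lt_succ fun i => (hAC i).trans (hCA i)
  have hA_lt_C {i k : ℕ} (h : A i < C k) : i ≤ k :=
    Nat.lt_succ_iff.mp (hmono.lt_iff_lt.mp (h.trans (hCA k)))
  have hC_lt_A {k j : ℕ} (h : C k < A j) : k < j := hmono.lt_iff_lt.mp ((hAC k).trans h)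
  have hlt {k : ℕ} (h : ∃ x, L[k]? = some x) : k < L.length := by
    obtain ⟨x, hx⟩ := h
    exact (List.getElem?_eq_some_iff.mp hx).1
  ext ⟨⟨p, r⟩, q⟩
  simp only [segments, mem_filter, mem_product, mem_range, mem_image, Prod.mk.injEq, mem_Ioo]
  constructor
  · rintro ⟨-, hpr, hrq, hp, hq, hr, hnoA, hnoC⟩
    obtain ⟨i, hi, rfl⟩ := (hA p).mp hp
    obtain ⟨j, hj, rfl⟩ := (hA q).mp hq
    obtain ⟨k, hk, rfl⟩ := (hC r).mp hr
    have hij : i < j := hmono.lt_iff_lt.mp (hpr.trans hrq)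
    have hj : j = i + 1 := by
      by_contra hne
      exact hnoA (A (i + 1)) ⟨hmono (Nat.lt_succ_self i), hmono (by omega)⟩
        ((hA _).mpr ⟨i + 1, by omega, rfl⟩)
    subst hj
    obtain rfl : k = i := le_antisymm (Nat.lt_succ_iff.mp (hC_lt_A hrq)) (hA_lt_C hpr)
    exact ⟨k, by omega, ⟨rfl, rfl⟩, rfl⟩
  · rintro ⟨i, hi, ⟨rfl, rfl⟩, rfl⟩
    have hpos_a : ∀ j ≤ n, A j < L.length := fun j hj => hlt ⟨sa, (hA _).mpr ⟨j, hj, rfl⟩⟩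
    refine ⟨⟨⟨hpos_a i hi.le, hlt ⟨sc, (hC _).mpr ⟨i, hi.le, rfl⟩⟩⟩, hpos_a (i + 1) hi⟩,
      hAC i, hCA i, (hA _).mpr ⟨i, hi.le, rfl⟩, (hA _).mpr ⟨i + 1, hi, rfl⟩,
      (hC _).mpr ⟨i, hi.le, rfl⟩, ?_, ?_⟩
    · rintro u ⟨hiu, hui⟩ hu
      obtain ⟨j, -, rfl⟩ := (hA u).mp hu
      have := hmono.lt_iff_lt.mp hiu
      have := hmono.lt_iff_lt.mp hui
      omega
    · rintro u ⟨hiu, hui⟩ hne hu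
      obtain ⟨k, -, rfl⟩ := (hC u).mp hu
      exact hne (by rw [le_antisymm (Nat.lt_succ_iff.mp (hC_lt_A hui)) (hA_lt_C hiu)])
end Segments

theorem List.getElem?_append_append_eq_some_iff_of_notMem {α : Type*} {L W V : List α} {x : α}
    (hx : x ∉ W) (k : ℕ) :
    (L ++ W ++ V)[k]? = some x ↔
      L[k]? = some x ∨ ∃ r, k = L.length + W.length + r ∧ V[r]? = some x := by
  have hW : ∀ r, W[r]? ≠ some x := fun r h => hx (List.mem_of_getElem? h)
  rw [List.append_assoc]
  rcases lt_or_ge k L.length with hk | hk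
  · rw [List.getElem?_append_left hk]
    exact ⟨Or.inl, by rintro (h | ⟨r, rfl, -⟩) <;> [exact h; omega]⟩
  rw [List.getElem?_append_right hk, List.getElem?_eq_none hk]
  simp only [reduceCtorEq, false_or]
  rcases lt_or_ge (k - L.length) W.length with hk' | hk'
  · rw [List.getElem?_append_left hk']
    exact ⟨fun h => (hW _ h).elim, by rintro ⟨r, rfl, -⟩; omega⟩
  · rw [List.getElem?_append_right hk']
    refine ⟨fun h => ⟨_, by omega, h⟩, ?_⟩
    rintro ⟨r, rfl, hr⟩
    rwa [show L.length + W.length + r - L.length - W.length = r by omega]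

namespace Monoid.CoprodI.NeWord

variable {ι : Type*} {M : ι → Type*} [∀ i, Monoid (M i)] {i j : ι}
  (v w : NeWord M i j) (hji : j ≠ i)

def powSucc : ℕ → NeWord M i j
  | 0 => w
  | k + 1 => (powSucc k).append hji w

def gWord : ℕ → NeWord M i j
  | 0 => v
  | n + 1 => ((gWord n).append hji (powSucc w hji n)).append hji v

-- `vStart v w hji m` is the index at which the `m`-th copy of `v` begins in `gWord v w hji n`.
def vStart : ℕ → ℕ
  | 0 => 0
  | n + 1 => vStart n + v.toList.length + (powSucc w hji n).toList.length

theorem prod_powSucc (k : ℕ) : (powSucc w hji k).prod = w.prod ^ (k + 1) := by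
  induction k with
  | zero => simp [powSucc]
  | succ k ih => rw [powSucc, append_prod, ih, ← pow_succ]

theorem prod_gWord (n : ℕ) : (gWord v w hji n).prod =
    ((List.range n).map fun k => v.prod * w.prod ^ (k + 1)).prod * v.prod := by
  induction n with
  | zero => simp [gWord]
  | succ n ih =>
    simp only [gWord, append_prod, ih, prod_powSucc, List.range_succ, List.map_append,
      List.prod_append, List.map_cons, List.map_nil, List.prod_cons, List.prod_nil, mul_one,
      mul_assoc]

theorem mem_toList_powSucc {x : Σ i, M i} (k : ℕ) :
    x ∈ (powSucc w hji k).toList ↔ x ∈ w.toList := by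
  induction k with
  | zero => rfl
  | succ k ih => simp [powSucc, ih]

theorem length_toList_powSucc (k : ℕ) :
    (powSucc w hji k).toList.length = (k + 1) * w.toList.length := by
  induction k with
  | zero => simp [powSucc]
  | succ k ih => simp only [powSucc, toList, List.length_append, ih]; ring

theorem length_toList_gWord (n : ℕ) :
    (gWord v w hji n).toList.length = vStart v w hji n + v.toList.length := by
  induction n with
  | zero => simp [gWord, vStart]
  | succ n ih => simp only [gWord, vStart, toList, List.length_append, ih]

theorem strictMono_vStart : StrictMono (vStart v w hji) :=
  strictMono_nat_of_lt_succ fun n => by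
    have := List.length_pos_of_ne_nil v.toList_ne_nil
    simp only [vStart]
    omega

theorem getElem?_toList_gWord_eq_some_iff {x : Σ i, M i} (hx : x ∉ w.toList) (n k : ℕ) :
    (gWord v w hji n).toList[k]? = some x ↔
      ∃ m ≤ n, ∃ r, k = vStart v w hji m + r ∧ v.toList[r]? = some x := by
  induction n generalizing k with
  | zero => simp [gWord, vStart]
  | succ n ih =>
    rw [gWord, toList, toList, List.getElem?_append_append_eq_some_iff_of_notMem
      (by rwa [mem_toList_powSucc]), ih, length_toList_gWord]
    constructor
    · rintro (⟨m, hm, r, rfl, hr⟩ | ⟨r, rfl, hr⟩)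
      · exact ⟨m, by omega, r, rfl, hr⟩
      · exact ⟨n + 1, le_rfl, r, rfl, hr⟩
    · rintro ⟨m, hm, r, rfl, hr⟩
      rcases Nat.lt_or_eq_of_le hm with hm | rfl
      · exact Or.inl ⟨m, by omega, r, rfl, hr⟩
      · exact Or.inr ⟨r, rfl, hr⟩

theorem segments_toList_gWord {sa sc : Σ i, M i} {ra rc : ℕ}
    (hva : ∀ r, v.toList[r]? = some sa ↔ r = ra) (hvc : ∀ r, v.toList[r]? = some sc ↔ r = rc)
    (hrac : ra < rc) (hwa : sa ∉ w.toList) (hwc : sc ∉ w.toList) (n : ℕ) :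
    segments sa sc (gWord v w hji n).toList = (range n).image fun m =>
      ((vStart v w hji m + ra, vStart v w hji m + rc), vStart v w hji (m + 1) + ra) := by
  have hrc : rc < v.toList.length := (List.getElem?_eq_some_iff.mp ((hvc rc).mpr rfl)).1
  refine segments_eq_image_of_interleaved (fun m => by omega) (fun m => ?_) (fun k => ?_)
    (fun k => ?_)
  · simp only [vStart]
    omega
  · simp [getElem?_toList_gWord_eq_some_iff v w hji hwa, hva]
  · simp [getElem?_toList_gWord_eq_some_iff v w hji hwc, hvc]

end Monoid.CoprodI.NeWord

theorem Monoid.CoprodI.NeWord.syllables_prod {ι : Type*} {M : ι → Type*} [∀ i, Group (M i)]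
    {i j : ι} (w : NeWord M i j) : syllables w.prod = w.toList := by
  let := Classical.decEq ι
  let : ∀ i, DecidableEq (M i) := fun _ => Classical.decEq _
  exact congrArg Word.toList (Word.equiv.apply_symm_apply w.toWord)

theorem Delta2_unbounded_sequence_general {M : Bool → Type*} [∀ b, Group (M b)]
    (a c f : M true) (b : M false)
    (ha : a ≠ 1) (hc : c ≠ 1) (hf : f ≠ 1) (hb : b ≠ 1)
    (hac : a ≠ c) (haf : a ≠ f) (hcf : c ≠ f)
    (n : ℕ) :
    letI v : CoprodI M := CoprodI.of b * CoprodI.of a * CoprodI.of b * CoprodI.of c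
    letI w : CoprodI M := CoprodI.of b * CoprodI.of f
    letI gn : CoprodI M := ((List.range n).map (fun i => v * w ^ (i + 1))).prod * v
    Delta2 ⟨true, a⟩ ⟨true, c⟩ gn = (n : ℤ) := by
  have hji : true ≠ false := by decide
  let V : NeWord M false true :=
    (((NeWord.singleton b hb).append (by decide) (.singleton a ha)).append (by decide)
      (.singleton b hb)).append (by decide) (.singleton c hc)
  let W : NeWord M false true := (NeWord.singleton b hb).append (by decide) (.singleton f hf)
  convert_to Delta2 _ _ (NeWord.gWord V W hji n).prod = n using 2
  · simp [NeWord.prod_gWord, V, W, mul_assoc]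
  have hVa (r : ℕ) : V.toList[r]? = some ⟨true, a⟩ ↔ r = 1 := by
    rcases r with _ | _ | _ | _ | r <;> simp [V, Ne.symm hac]
  have hVc (r : ℕ) : V.toList[r]? = some ⟨true, c⟩ ↔ r = 3 := by
    rcases r with _ | _ | _ | _ | r <;> simp [V, hac]
  have hWa : (⟨true, a⟩ : Σ i, M i) ∉ W.toList := by simp [W, haf]
  have hWc : (⟨true, c⟩ : Σ i, M i) ∉ W.toList := by simp [W, hcf]
  rw [Delta2_eq_sum_sign, NeWord.syllables_prod,
    NeWord.segments_toList_gWord V W hji hVa hVc (by norm_num) hWa hWc]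
  have hinj : Set.InjOn (fun m => ((NeWord.vStart V W hji m + 1, NeWord.vStart V W hji m + 3),
      NeWord.vStart V W hji (m + 1) + 1)) (range n) := fun m _ m' _ h =>
    (NeWord.strictMono_vStart V W hji).injective (by simpa using congrArg (·.1.1) h)
  rw [sum_image hinj]
  have htype (m : ℕ) : segmentType ((V.vStart W hji m + 1, V.vStart W hji m + 3),
      V.vStart W hji (m + 1) + 1) = (1, 2 * m + 3) := by
    simp only [segmentType, NeWord.vStart, NeWord.length_toList_powSucc, V, W, NeWord.toList,
      List.length_append, List.length_singleton, Prod.mk.injEq]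
    omega
  simp only [htype]
  rw [sum_congr rfl fun m _ => Int.sign_eq_one_of_pos (by omega), sum_const, card_range]
  simp

/-- For `g_n = v w v w² ⋯ v wⁿ v` with `v = babc` and `w = bf`, one has
`Δ₂(g_n) = n` for all `n ≥ 1`. -/
theorem Delta2_unbounded_sequence {M : Bool → Type*} [∀ b, Group (M b)]
    (a c f : M true) (b : M false)
    (ha : a ≠ 1) (hc : c ≠ 1) (hf : f ≠ 1) (hb : b ≠ 1)
    (hac : a ≠ c) (haf : a ≠ f) (hcf : c ≠ f)
    (n : ℕ) (hn : 1 ≤ n) :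
    letI v : CoprodI M := CoprodI.of b * CoprodI.of a * CoprodI.of b * CoprodI.of c
    letI w : CoprodI M := CoprodI.of b * CoprodI.of f
    letI gn : CoprodI M := ((List.range n).map (fun i => v * w ^ (i + 1))).prod * v
    Delta2 ⟨true, a⟩ ⟨true, c⟩ gn = (n : ℤ) :=
  Delta2_unbounded_sequence_general a c f b ha hc hf hb hac haf hcf n
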